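/- Let U : ℝ^d → ℝ be twice continuously differentiable, λ-strongly convex and L-smooth with 0 < λ ≤ L, and let x ∈ ℝ^d with ∇U(x) ≠ 0. For z ∼ N_d(0, I_d) and σ > 0, the average Metropolis acceptance probability of the Gaussian random-walk proposal satisfies E_z[min(1, exp(U(x) − U(x + σz)))] ≤ exp(−λσ²d/4) + 2[exp(−(λσd)²/(64‖∇U(x)‖²)) + exp(−d/32)]. -/

import Mathlib

open MeasureTheory ProbabilityTheory

noncomputable section

/-- The standard Gaussian measure `N_d(0, I_d)` on `ℝ^d` (Euclidean space). -/
def stdGaussian (d : ℕ) : Measure (EuclideanSpace ℝ (Fin d)) :=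
  Measure.map (MeasurableEquiv.toLp 2 (Fin d → ℝ))
    (Measure.pi fun _ : Fin d => gaussianReal 0 1)

open Real

/-! ### Auxiliary analytic lemmas -/

/-- Key exponential bound derived from `log (1+x) ≥ x/(1+x)`. -/
lemma rwm_expbound (d : ℕ) (u S θ : ℝ) (hu : 0 < u) (hS : 0 ≤ S) (hθ0 : 0 ≤ θ) :
    ((Real.sqrt (1 + θ * u))⁻¹) ^ d * Real.exp (θ ^ 2 * S / (2 * (1 + θ * u)))
      ≤ Real.exp (-(θ * ((d : ℝ) * u - θ * S) / (2 * (1 + θ * u)))) := by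
  have hK : (0:ℝ) < 1 + θ * u := by nlinarith
  have h1 : Real.sqrt (1 + θ * u) = Real.exp (Real.log (1 + θ * u) / 2) := by
    rw [Real.sqrt_eq_rpow, Real.rpow_def_of_pos hK, mul_one_div]
  have hLHS : ((Real.sqrt (1 + θ * u))⁻¹) ^ d * Real.exp (θ ^ 2 * S / (2 * (1 + θ * u)))
      = Real.exp (θ ^ 2 * S / (2 * (1 + θ * u)) - (d : ℝ) * Real.log (1 + θ * u) / 2) := by
    rw [h1, ← Real.exp_neg, ← Real.exp_nat_mul, ← Real.exp_add]
    congr 1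
    ring
  rw [hLHS]
  apply Real.exp_le_exp.mpr
  have hlog : θ * u / (1 + θ * u) ≤ Real.log (1 + θ * u) := by
    have h2 := Real.log_le_sub_one_of_pos (inv_pos.mpr hK)
    rw [Real.log_inv] at h2
    have : (1 + θ * u)⁻¹ - 1 = -(θ * u / (1 + θ * u)) := by field_simp; ring
    linarith [this ▸ h2]
  have hd0 : (0:ℝ) ≤ (d : ℝ) := Nat.cast_nonneg d
  have h3 : (d : ℝ) * (θ * u / (1 + θ * u)) / 2 ≤ (d : ℝ) * Real.log (1 + θ * u) / 2 := by
    apply div_le_div_of_nonneg_right ?_ (by norm_num)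
    exact mul_le_mul_of_nonneg_left hlog hd0
  have h4 : θ ^ 2 * S / (2 * (1 + θ * u)) - (d : ℝ) * (θ * u / (1 + θ * u)) / 2
      = -(θ * ((d : ℝ) * u - θ * S) / (2 * (1 + θ * u))) := by
    field_simp
    ring
  linarith [h4 ▸ (sub_le_sub_left h3 (θ ^ 2 * S / (2 * (1 + θ * u))))]

set_option maxHeartbeats 1000000 in
/-- In every parameter regime some `θ ∈ [0,1]` makes the bound smaller than one of the
three terms on the right. -/
lemma rwm_analytic (d : ℕ) (hd : 1 ≤ d) (u S : ℝ) (hu : 0 < u) (hS : 0 < S) :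
    ∃ θ : ℝ, 0 ≤ θ ∧ θ ≤ 1 ∧
      ((Real.sqrt (1 + θ * u))⁻¹) ^ d * Real.exp (θ ^ 2 * S / (2 * (1 + θ * u)))
        ≤ Real.exp (-(u * d) / 4)
          + 2 * (Real.exp (-(u * d) ^ 2 / (64 * S)) + Real.exp (-(d : ℝ) / 32)) := by
  have hd1 : (1:ℝ) ≤ (d:ℝ) := by exact_mod_cast hd
  have hd0 : (0:ℝ) < (d:ℝ) := by linarith
  have hA := Real.exp_pos (-(u * (d:ℝ)) / 4)
  have hB := Real.exp_pos (-(u * (d:ℝ)) ^ 2 / (64 * S))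
  have hC := Real.exp_pos (-(d : ℝ) / 32)
  rcases le_or_gt u (1/2) with h1 | h1
  · rcases le_or_gt S (u * d / 4) with h2 | h2
    · -- θ = 1, bound by first term
      refine ⟨1, by norm_num, le_refl 1, ?_⟩
      refine le_trans (rwm_expbound d u S 1 hu hS.le (by norm_num)) ?_
      have key : u * (d:ℝ) / 4 ≤ 1 * ((d : ℝ) * u - 1 * S) / (2 * (1 + 1 * u)) := by
        rw [le_div_iff₀ (by nlinarith)]
        nlinarith
      have : Real.exp (-(1 * ((d : ℝ) * u - 1 * S) / (2 * (1 + 1 * u)))) ≤ Real.exp (-(u * d) / 4) := by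
        apply Real.exp_le_exp.mpr; rw [neg_div]; linarith
      linarith
    · rcases le_or_gt S (u * d / 2) with h3 | h3
      · -- θ = 1, bound by B term
        refine ⟨1, by norm_num, le_refl 1, ?_⟩
        refine le_trans (rwm_expbound d u S 1 hu hS.le (by norm_num)) ?_
        have key : (u * (d:ℝ)) ^ 2 / (64 * S) ≤ 1 * ((d : ℝ) * u - 1 * S) / (2 * (1 + 1 * u)) := by
          rw [div_le_div_iff₀ (by positivity) (by nlinarith)]
          nlinarith [mul_pos hu hd0, mul_pos (mul_pos hu hd0) hS]
        have : Real.exp (-(1 * ((d : ℝ) * u - 1 * S) / (2 * (1 + 1 * u))))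
            ≤ Real.exp (-(u * d) ^ 2 / (64 * S)) := by
          apply Real.exp_le_exp.mpr; rw [neg_div]; linarith
        linarith
      · -- θ = u d / (2 S), bound by B term
        set θ : ℝ := u * (d:ℝ) / (2 * S) with hθdef
        have hθ0 : 0 ≤ θ := by positivity
        have hθ1 : θ ≤ 1 := by rw [hθdef, div_le_one (by positivity)]; linarith
        refine ⟨θ, hθ0, hθ1, ?_⟩
        refine le_trans (rwm_expbound d u S θ hu hS.le hθ0) ?_
        have hθu : θ * u ≤ 1/2 := by
          have : θ * u ≤ 1 * u := by
            apply mul_le_mul_of_nonneg_right hθ1 hu.le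
          linarith
        have hnum : θ * ((d:ℝ) * u - θ * S) = (u * (d:ℝ)) ^ 2 / (4 * S) := by
          rw [hθdef]; field_simp; ring
        have key : (u * (d:ℝ)) ^ 2 / (64 * S) ≤ θ * ((d : ℝ) * u - θ * S) / (2 * (1 + θ * u)) := by
          rw [hnum, div_div]
          apply div_le_div_of_nonneg_left (by positivity) (by positivity)
          nlinarith
        have : Real.exp (-(θ * ((d : ℝ) * u - θ * S) / (2 * (1 + θ * u))))
            ≤ Real.exp (-(u * d) ^ 2 / (64 * S)) := by
          apply Real.exp_le_exp.mpr; rw [neg_div]; linarith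
        linarith
  · rcases le_or_gt S (3/2 * u^2 * d) with h2 | h2
    · -- θ = 1/(2u), bound by C term
      set θ : ℝ := 1 / (2 * u) with hθdef
      have hθ0 : 0 ≤ θ := by positivity
      have hθ1 : θ ≤ 1 := by rw [hθdef, div_le_one (by positivity)]; linarith
      refine ⟨θ, hθ0, hθ1, ?_⟩
      refine le_trans (rwm_expbound d u S θ hu hS.le hθ0) ?_
      have hθu : θ * u = 1/2 := by rw [hθdef]; field_simp
      have hθS : θ * S ≤ 3/4 * (u * d) := by
        rw [hθdef, div_mul_eq_mul_div, div_le_iff₀ (by positivity)]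
        nlinarith
      have h5 : u * (d:ℝ) / 4 ≤ (d:ℝ) * u - θ * S := by linarith
      have h6 : θ * (u * (d:ℝ) / 4) = (d:ℝ) / 8 := by rw [hθdef]; field_simp; ring
      have hnum : (d:ℝ) / 8 ≤ θ * ((d:ℝ) * u - θ * S) := by
        rw [← h6]; exact mul_le_mul_of_nonneg_left h5 hθ0
      have hden : 2 * (1 + θ * u) = 3 := by rw [hθu]; norm_num
      have key : (d:ℝ) / 32 ≤ θ * ((d : ℝ) * u - θ * S) / (2 * (1 + θ * u)) := by
        rw [hden, le_div_iff₀ (by norm_num)]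
        linarith
      have : Real.exp (-(θ * ((d : ℝ) * u - θ * S) / (2 * (1 + θ * u))))
          ≤ Real.exp (-(d:ℝ) / 32) := by
        apply Real.exp_le_exp.mpr; rw [neg_div]; linarith
      linarith
    · -- θ = u d/(2 S), bound by B term
      set θ : ℝ := u * (d:ℝ) / (2 * S) with hθdef
      have hθ0 : 0 ≤ θ := by positivity
      have hud2S : u * (d:ℝ) ≤ 2 * S := by nlinarith [mul_pos hu hd0]
      have hθ1 : θ ≤ 1 := by
        rw [hθdef, div_le_one (by positivity)]
        linarith
      refine ⟨θ, hθ0, hθ1, ?_⟩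
      refine le_trans (rwm_expbound d u S θ hu hS.le hθ0) ?_
      have hu2d : (0:ℝ) ≤ u^2 * d := by positivity
      have hθu : θ * u ≤ 1/2 := by
        rw [hθdef, div_mul_eq_mul_div, div_le_iff₀ (by positivity)]
        have h9 : u * (d:ℝ) * u = u^2 * d := by ring
        rw [h9]; linarith
      have hnum : θ * ((d:ℝ) * u - θ * S) = (u * (d:ℝ)) ^ 2 / (4 * S) := by
        rw [hθdef]; field_simp; ring
      have key : (u * (d:ℝ)) ^ 2 / (64 * S) ≤ θ * ((d : ℝ) * u - θ * S) / (2 * (1 + θ * u)) := by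
        rw [hnum, div_div]
        apply div_le_div_of_nonneg_left (by positivity) (by positivity)
        nlinarith
      have : Real.exp (-(θ * ((d : ℝ) * u - θ * S) / (2 * (1 + θ * u))))
          ≤ Real.exp (-(u * d) ^ 2 / (64 * S)) := by
        apply Real.exp_le_exp.mpr; rw [neg_div]; linarith
      linarith

/-! ### Gaussian integral computations -/

open scoped ENNReal NNReal

lemma rwm_pdf_mul (f : ℝ → ℝ) :
    (fun t => ((gaussianPDFReal 0 1 t).toNNReal : ℝ) * f t)
      = fun t => gaussianPDFReal 0 1 t * f t := by
  funext t
  rw [Real.coe_toNNReal _ (gaussianPDFReal_nonneg 0 1 t)]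

lemma rwm_gauss_withDensity :
    gaussianReal 0 1 = MeasureTheory.Measure.withDensity volume
      (fun x => ((gaussianPDFReal 0 1 x).toNNReal : ℝ≥0∞)) := by
  rw [gaussianReal_of_var_ne_zero 0 one_ne_zero, gaussianPDF_def]
  rfl

lemma rwm_gauss_integral (f : ℝ → ℝ) :
    ∫ t, f t ∂(gaussianReal 0 1) = ∫ t, gaussianPDFReal 0 1 t * f t := by
  rw [rwm_gauss_withDensity,
    integral_withDensity_eq_integral_smul ((measurable_gaussianPDFReal 0 1).real_toNNReal) f]
  rw [show (fun t => (gaussianPDFReal 0 1 t).toNNReal • f t)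
      = fun t => ((gaussianPDFReal 0 1 t).toNNReal : ℝ) * f t from rfl, rwm_pdf_mul]

lemma rwm_gauss_integrable_iff (f : ℝ → ℝ) :
    Integrable f (gaussianReal 0 1) ↔ Integrable (fun t => gaussianPDFReal 0 1 t * f t) volume := by
  rw [rwm_gauss_withDensity,
    integrable_withDensity_iff_integrable_coe_smul
      ((measurable_gaussianPDFReal 0 1).real_toNNReal)]
  rw [show (fun x => ((gaussianPDFReal 0 1 x).toNNReal : ℝ) • f x)
      = fun t => ((gaussianPDFReal 0 1 t).toNNReal : ℝ) * f t from rfl, rwm_pdf_mul]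

lemma rwm_pdf_key (a b : ℝ) (hb : 0 ≤ b) (t : ℝ) :
    gaussianPDFReal 0 1 t * Real.exp (-(a * t) - b * t ^ 2)
      = ((Real.sqrt (2 * π))⁻¹ * Real.exp (a ^ 2 / (2 * (1 + 2 * b))))
          * Real.exp (-(b + 1/2) * (t + a / (2 * (b + 1/2))) ^ 2) := by
  have hq : (0:ℝ) < b + 1/2 := by linarith
  have h12b : (0:ℝ) < 1 + 2 * b := by linarith
  simp only [gaussianPDFReal, NNReal.coe_one, mul_one, sub_zero]
  rw [mul_assoc, ← Real.exp_add, mul_assoc, ← Real.exp_add]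
  congr 1
  congr 1
  field_simp
  ring

lemma rwm_gauss_one_dim_integrable (a b : ℝ) (hb : 0 ≤ b) :
    Integrable (fun t => Real.exp (-(a * t) - b * t ^ 2)) (gaussianReal 0 1) := by
  have hq : (0:ℝ) < b + 1/2 := by linarith
  rw [rwm_gauss_integrable_iff]
  have := ((integrable_exp_neg_mul_sq hq).comp_add_right (a / (2 * (b + 1/2)))).const_mul
      ((Real.sqrt (2 * π))⁻¹ * Real.exp (a ^ 2 / (2 * (1 + 2 * b))))
  refine this.congr ?_
  filter_upwards with t
  rw [rwm_pdf_key a b hb t]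

lemma rwm_gauss_one_dim (a b : ℝ) (hb : 0 ≤ b) :
    ∫ t, Real.exp (-(a * t) - b * t ^ 2) ∂(gaussianReal 0 1)
      = (Real.sqrt (1 + 2 * b))⁻¹ * Real.exp (a ^ 2 / (2 * (1 + 2 * b))) := by
  have hq : (0:ℝ) < b + 1/2 := by linarith
  have h12b : (0:ℝ) < 1 + 2 * b := by linarith
  have h2π : (0:ℝ) < 2 * π := by positivity
  rw [rwm_gauss_integral]
  calc ∫ t, gaussianPDFReal 0 1 t * Real.exp (-(a * t) - b * t ^ 2)
      = ∫ t, ((Real.sqrt (2 * π))⁻¹ * Real.exp (a ^ 2 / (2 * (1 + 2 * b))))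
          * Real.exp (-(b + 1/2) * (t + a / (2 * (b + 1/2))) ^ 2) := by
        congr 1; funext t; exact rwm_pdf_key a b hb t
    _ = ((Real.sqrt (2 * π))⁻¹ * Real.exp (a ^ 2 / (2 * (1 + 2 * b))))
          * ∫ t, Real.exp (-(b + 1/2) * (t + a / (2 * (b + 1/2))) ^ 2) := by
        rw [integral_const_mul]
    _ = ((Real.sqrt (2 * π))⁻¹ * Real.exp (a ^ 2 / (2 * (1 + 2 * b))))
          * ∫ t, Real.exp (-(b + 1/2) * t ^ 2) := by
        congr 1
        exact integral_add_right_eq_self (fun t => Real.exp (-(b + 1/2) * t ^ 2))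
          (a / (2 * (b + 1/2)))
    _ = ((Real.sqrt (2 * π))⁻¹ * Real.exp (a ^ 2 / (2 * (1 + 2 * b))))
          * Real.sqrt (π / (b + 1/2)) := by rw [integral_gaussian]
    _ = (Real.sqrt (1 + 2 * b))⁻¹ * Real.exp (a ^ 2 / (2 * (1 + 2 * b))) := by
        rw [show π / (b + 1/2) = (2 * π) / (1 + 2 * b) by field_simp; ring]
        rw [Real.sqrt_div h2π.le]
        have hs2 : Real.sqrt (2 * π) ≠ 0 := by positivity
        field_simp

lemma rwm_pi_integral {d : ℕ} (f : Fin d → ℝ → ℝ) :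
    ∫ w : Fin d → ℝ, ∏ i, f i (w i) ∂(Measure.pi fun _ : Fin d => gaussianReal 0 1)
      = ∏ i, ∫ t, f i t ∂(gaussianReal 0 1) := by
  letI : MeasureSpace ℝ := ⟨gaussianReal 0 1⟩
  haveI : SigmaFinite (volume : Measure ℝ) := inferInstanceAs (SigmaFinite (gaussianReal 0 1))
  exact MeasureTheory.integral_fintype_prod_eq_prod f

lemma rwm_pi_integrable {d : ℕ} (f : Fin d → ℝ → ℝ)
    (hf : ∀ i, Integrable (f i) (gaussianReal 0 1)) :
    Integrable (fun w : Fin d → ℝ => ∏ i, f i (w i))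
      (Measure.pi fun _ : Fin d => gaussianReal 0 1) := by
  letI : MeasureSpace ℝ := ⟨gaussianReal 0 1⟩
  haveI : SigmaFinite (volume : Measure ℝ) := inferInstanceAs (SigmaFinite (gaussianReal 0 1))
  exact MeasureTheory.Integrable.fintype_prod hf

open RealInnerProductSpace in
lemma rwm_coord (d : ℕ) (g : EuclideanSpace ℝ (Fin d)) (c₁ c₂ : ℝ) (w : Fin d → ℝ) :
    Real.exp (-(c₁ * ⟪g, (MeasurableEquiv.toLp 2 (Fin d → ℝ)) w⟫)
        - c₂ * ‖(MeasurableEquiv.toLp 2 (Fin d → ℝ)) w‖ ^ 2)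
      = ∏ i, Real.exp (-(c₁ * g i * w i) - c₂ * w i ^ 2) := by
  have hz : ∀ i, ((MeasurableEquiv.toLp 2 (Fin d → ℝ)) w) i = w i := fun i => rfl
  have hinner : ⟪g, (MeasurableEquiv.toLp 2 (Fin d → ℝ)) w⟫ = ∑ i, g i * w i := by
    rw [PiLp.inner_apply]
    simp [hz, RCLike.inner_apply]
    exact Finset.sum_congr rfl fun i _ => mul_comm _ _
  have hnorm : ‖(MeasurableEquiv.toLp 2 (Fin d → ℝ)) w‖ ^ 2 = ∑ i, w i ^ 2 := by
    rw [EuclideanSpace.norm_eq]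
    rw [Real.sq_sqrt (by positivity)]
    simp [hz]
  rw [hinner, hnorm, ← Real.exp_sum]
  congr 1
  rw [Finset.mul_sum, Finset.mul_sum, ← Finset.sum_neg_distrib, ← Finset.sum_sub_distrib]
  apply Finset.sum_congr rfl
  intros; ring

open RealInnerProductSpace in
lemma rwm_stdGaussian_eval (d : ℕ) (g : EuclideanSpace ℝ (Fin d)) (c₁ c₂ : ℝ) (hc₂ : 0 ≤ c₂) :
    ∫ z, Real.exp (-(c₁ * ⟪g, z⟫) - c₂ * ‖z‖ ^ 2) ∂(stdGaussian d)
      = ((Real.sqrt (1 + 2 * c₂))⁻¹) ^ d * Real.exp (c₁ ^ 2 * ‖g‖ ^ 2 / (2 * (1 + 2 * c₂))) := by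
  rw [_root_.stdGaussian, MeasureTheory.integral_map_equiv]
  calc ∫ w : Fin d → ℝ, Real.exp (-(c₁ * ⟪g, (MeasurableEquiv.toLp 2 (Fin d → ℝ)) w⟫)
        - c₂ * ‖(MeasurableEquiv.toLp 2 (Fin d → ℝ)) w‖ ^ 2)
        ∂(Measure.pi fun _ : Fin d => gaussianReal 0 1)
      = ∫ w : Fin d → ℝ, ∏ i, Real.exp (-(c₁ * g i * w i) - c₂ * w i ^ 2)
        ∂(Measure.pi fun _ : Fin d => gaussianReal 0 1) := by
        congr 1; funext w; exact rwm_coord d g c₁ c₂ w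
    _ = ∏ i, ∫ t, Real.exp (-(c₁ * g i * t) - c₂ * t ^ 2) ∂(gaussianReal 0 1) :=
        rwm_pi_integral (fun i t => Real.exp (-(c₁ * g i * t) - c₂ * t ^ 2))
    _ = ∏ i : Fin d, ((Real.sqrt (1 + 2 * c₂))⁻¹
          * Real.exp ((c₁ * g i) ^ 2 / (2 * (1 + 2 * c₂)))) := by
        apply Finset.prod_congr rfl
        intro i _
        exact rwm_gauss_one_dim (c₁ * g i) c₂ hc₂
    _ = ((Real.sqrt (1 + 2 * c₂))⁻¹) ^ d * Real.exp (c₁ ^ 2 * ‖g‖ ^ 2 / (2 * (1 + 2 * c₂))) := by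
        rw [Finset.prod_mul_distrib, Finset.prod_const, ← Real.exp_sum]
        congr 1
        · simp
        · congr 1
          rw [show ‖g‖ ^ 2 = ∑ i, g i ^ 2 by
            rw [EuclideanSpace.norm_eq, Real.sq_sqrt (by positivity)]; simp]
          rw [Finset.mul_sum, Finset.sum_div]
          apply Finset.sum_congr rfl
          intros; ring

open RealInnerProductSpace in
lemma rwm_stdGaussian_integrable (d : ℕ) (g : EuclideanSpace ℝ (Fin d)) (c₁ c₂ : ℝ)
    (hc₂ : 0 ≤ c₂) :
    Integrable (fun z => Real.exp (-(c₁ * ⟪g, z⟫) - c₂ * ‖z‖ ^ 2)) (stdGaussian d) := by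
  rw [_root_.stdGaussian, MeasureTheory.integrable_map_equiv]
  have : ((fun z : EuclideanSpace ℝ (Fin d) => Real.exp (-(c₁ * ⟪g, z⟫) - c₂ * ‖z‖ ^ 2))
        ∘ (MeasurableEquiv.toLp 2 (Fin d → ℝ)))
      = fun w : Fin d → ℝ => ∏ i, Real.exp (-(c₁ * g i * w i) - c₂ * w i ^ 2) := by
    funext w; exact rwm_coord d g c₁ c₂ w
  rw [this]
  exact rwm_pi_integrable _ (fun i => rwm_gauss_one_dim_integrable (c₁ * g i) c₂ hc₂)

/-! ### Strong convexity inequality -/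

open RealInnerProductSpace in
lemma rwm_strong_convex {E : Type*} [NormedAddCommGroup E] [InnerProductSpace ℝ E]
    [CompleteSpace E] (U : E → ℝ) (lam : ℝ) (hdiff : Differentiable ℝ U)
    (hconv : ConvexOn ℝ Set.univ (fun y => U y - lam / 2 * ‖y‖ ^ 2)) (x v : E) :
    U x + ⟪gradient U x, v⟫ + lam / 2 * ‖v‖ ^ 2 ≤ U (x + v) := by
  set φ : E → ℝ := fun y => U y - lam / 2 * ‖y‖ ^ 2 with hφ
  set ψ : ℝ → ℝ := fun t => φ (x + t • v) with hψ
  have hψconv : ConvexOn ℝ Set.univ ψ := by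
    have h := hconv.comp_affineMap (AffineMap.lineMap x (x + v) : ℝ →ᵃ[ℝ] E)
    rw [Set.preimage_univ] at h
    have heq : ψ = φ ∘ (AffineMap.lineMap x (x + v) : ℝ →ᵃ[ℝ] E) := by
      funext t
      simp [hψ, AffineMap.lineMap_apply, add_sub_cancel_left, add_comm]
    rwa [heq]
  have hc : ∀ t : ℝ, HasDerivAt (fun s : ℝ => x + s • v) v t := by
    intro t
    simpa using ((hasDerivAt_id t).smul_const v).const_add x
  have hU : HasDerivAt (fun t : ℝ => U (x + t • v)) ⟪gradient U x, v⟫ 0 := by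
    have h1 : HasFDerivAt U (InnerProductSpace.toDual ℝ E (gradient U x)) x :=
      hasGradientAt_iff_hasFDerivAt.mp (hdiff x).hasGradientAt
    have h2 := HasFDerivAt.comp_hasDerivAt 0 (by simpa using h1) (hc 0)
    simpa [InnerProductSpace.toDual_apply_apply, Function.comp_def] using h2
  have hN : HasDerivAt (fun t : ℝ => ‖x + t • v‖ ^ 2) (2 * ⟪x, v⟫) 0 := by
    have h3 := HasDerivAt.inner ℝ (hc 0) (hc 0)
    have h4 : ∀ t : ℝ, ⟪x + t • v, x + t • v⟫ = ‖x + t • v‖ ^ 2 := fun t =>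
      real_inner_self_eq_norm_sq _
    simp only [h4] at h3
    exact h3.congr_deriv (by rw [zero_smul, add_zero, real_inner_comm x v]; ring)
  have hψd : HasDerivAt ψ (⟪gradient U x, v⟫ - lam / 2 * (2 * ⟪x, v⟫)) 0 := by
    have := hU.sub (hN.const_mul (lam / 2))
    simpa [hψ, hφ, mul_comm, Pi.sub_def] using this
  have hslope := hψconv.le_slope_of_hasDerivAt (Set.mem_univ (0:ℝ)) (Set.mem_univ (1:ℝ))
    zero_lt_one hψd
  have hs : slope ψ 0 1 = ψ 1 - ψ 0 := by
    rw [slope_def_field]; norm_num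
  rw [hs] at hslope
  have h1 : ψ 1 = U (x + v) - lam / 2 * ‖x + v‖ ^ 2 := by simp [hψ, hφ]
  have h0 : ψ 0 = U x - lam / 2 * ‖x‖ ^ 2 := by simp [hψ, hφ]
  have hexp : ‖x + v‖ ^ 2 = ‖x‖ ^ 2 + 2 * ⟪x, v⟫ + ‖v‖ ^ 2 := norm_add_sq_real x v
  rw [h1, h0, hexp] at hslope
  nlinarith [hslope]

/-! ### Main theorem -/

open RealInnerProductSpace in
/-- pointwise bound on the average Metropolis acceptance probability of the
Gaussian random-walk proposal. -/
theorem rwm_acceptance_pointwise_bound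
    (d : ℕ) (hd : 1 ≤ d)
    (U : EuclideanSpace ℝ (Fin d) → ℝ) (L lam : ℝ)
    (hlam : 0 < lam) (hlamL : lam ≤ L)
    (hC2 : ContDiff ℝ 2 U)
    (hsmooth : ∀ x y, ‖gradient U x - gradient U y‖ ≤ L * ‖x - y‖)
    (hconv : ConvexOn ℝ Set.univ (fun x => U x - lam / 2 * ‖x‖ ^ 2))
    (x : EuclideanSpace ℝ (Fin d)) (hx : gradient U x ≠ 0)
    (σ : ℝ) (hσ : 0 < σ) :
    ∫ z, min 1 (Real.exp (U x - U (x + σ • z))) ∂(stdGaussian d)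
      ≤ Real.exp (-(lam * σ ^ 2 * d) / 4)
        + 2 * (Real.exp (-(lam * σ * d) ^ 2 / (64 * ‖gradient U x‖ ^ 2))
            + Real.exp (-(d : ℝ) / 32)) := by
  have hdiff : Differentiable ℝ U := hC2.differentiable (by norm_num)
  set g : EuclideanSpace ℝ (Fin d) := gradient U x with hgdef
  have hG : 0 < ‖g‖ := norm_pos_iff.mpr hx
  have hu : 0 < lam * σ ^ 2 := by positivity
  have hS : 0 < σ ^ 2 * ‖g‖ ^ 2 := by positivity
  obtain ⟨θ, hθ0, hθ1, hθbound⟩ := rwm_analytic d hd (lam * σ ^ 2) (σ ^ 2 * ‖g‖ ^ 2) hu hS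
  have hc₂ : 0 ≤ θ * lam * σ ^ 2 / 2 := by
    apply div_nonneg _ (by norm_num)
    exact mul_nonneg (mul_nonneg hθ0 hlam.le) (sq_nonneg σ)
  have hint := rwm_stdGaussian_integrable d g (θ * σ) (θ * lam * σ ^ 2 / 2) hc₂
  have heval := rwm_stdGaussian_eval d g (θ * σ) (θ * lam * σ ^ 2 / 2) hc₂
  -- pointwise bound
  have hpt : ∀ z, min 1 (Real.exp (U x - U (x + σ • z)))
      ≤ Real.exp (-(θ * σ * ⟪g, z⟫) - θ * lam * σ ^ 2 / 2 * ‖z‖ ^ 2) := by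
    intro z
    have hkey : U x - U (x + σ • z) ≤ -(σ * ⟪g, z⟫ + lam / 2 * (σ ^ 2 * ‖z‖ ^ 2)) := by
      have h := rwm_strong_convex U lam hdiff hconv x (σ • z)
      have h1 : ⟪g, σ • z⟫ = σ * ⟪g, z⟫ := real_inner_smul_right g z σ
      have h2 : ‖σ • z‖ ^ 2 = σ ^ 2 * ‖z‖ ^ 2 := by
        rw [norm_smul, mul_pow]
        simp [sq_abs]
      rw [← hgdef, h1, h2] at h
      linarith
    set W : ℝ := σ * ⟪g, z⟫ + lam / 2 * (σ ^ 2 * ‖z‖ ^ 2) with hW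
    have harg : -(θ * σ * ⟪g, z⟫) - θ * lam * σ ^ 2 / 2 * ‖z‖ ^ 2 = -(θ * W) := by
      rw [hW]; ring
    rw [harg]
    rcases le_or_gt W 0 with h | h
    · refine le_trans (min_le_left _ _) ?_
      rw [← Real.exp_zero]
      apply Real.exp_le_exp.mpr
      nlinarith
    · refine le_trans (min_le_right _ _) ?_
      apply Real.exp_le_exp.mpr
      nlinarith
  have hmono : ∫ z, min 1 (Real.exp (U x - U (x + σ • z))) ∂(stdGaussian d)
      ≤ ∫ z, Real.exp (-(θ * σ * ⟪g, z⟫) - θ * lam * σ ^ 2 / 2 * ‖z‖ ^ 2) ∂(stdGaussian d) := by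
    apply integral_mono_of_nonneg
    · filter_upwards with z
      exact le_min zero_le_one (Real.exp_nonneg _)
    · exact hint
    · filter_upwards with z
      exact hpt z
  refine hmono.trans ?_
  rw [heval]
  have hK : 1 + 2 * (θ * lam * σ ^ 2 / 2) = 1 + θ * (lam * σ ^ 2) := by ring
  rw [hK, show (θ * σ) ^ 2 * ‖g‖ ^ 2 / (2 * (1 + θ * (lam * σ ^ 2)))
      = θ ^ 2 * (σ ^ 2 * ‖g‖ ^ 2) / (2 * (1 + θ * (lam * σ ^ 2))) from by ring]
  refine hθbound.trans (le_of_eq ?_)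
  have hBeq : -(lam * σ ^ 2 * (d:ℝ)) ^ 2 / (64 * (σ ^ 2 * ‖g‖ ^ 2))
      = -(lam * σ * (d:ℝ)) ^ 2 / (64 * ‖g‖ ^ 2) := by
    rw [div_eq_div_iff
      (by positivity) (by positivity)]
    ring
  rw [hBeq]
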